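/- The surface-tension integral of the profile: ∫_{−∞}^{∞} W(tanh(z/√2)) dz = √2/3, where W(φ) = (1/4)(φ² − 1)². -/

import Mathlib

/-!
Since `tanh' = 1 - tanh ^ 2`, the function `tanh - tanh ^ 3 / 3` is an antiderivative of
`(1 - tanh ^ 2) ^ 2`; it increases from `-2/3` to `2/3`, so `∫ (1 - tanh x ^ 2) ^ 2 dx = 4/3`.
As `W(φ) = (1 - φ ^ 2) ^ 2 / 4`, the substitution `z = √2 x` gives `√2 / 4 * 4/3 = √2 / 3`.
-/

open Real MeasureTheory Filter Topology Set

lemma integrable_of_hasDerivAt_of_nonneg {g g' : ℝ → ℝ} {a b : ℝ}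
    (hderiv : ∀ x, HasDerivAt g (g' x) x) (hg' : ∀ x, 0 ≤ g' x)
    (hbot : Tendsto g atBot (𝓝 a)) (htop : Tendsto g atTop (𝓝 b)) : Integrable g' := by
  have hIoi : IntegrableOn g' (Ioi 0) :=
    integrableOn_Ioi_deriv_of_nonneg' (fun x _ => hderiv x) (fun x _ => hg' x) htop
  have hreflect : ∀ x, HasDerivAt (fun y => -g (-y)) (g' (-x)) x := fun x =>
    (((hderiv (-x)).comp x (hasDerivAt_neg x)).neg).congr_deriv (by ring)
  have hIio : IntegrableOn g' (Iio 0) := by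
    have := integrableOn_Ioi_deriv_of_nonneg' (a := -0) (fun x _ => hreflect x)
      (fun x _ => hg' (-x)) (hbot.comp tendsto_neg_atTop_atBot).neg
    simpa only [neg_neg] using this.comp_neg_Iio
  rw [← integrableOn_univ, ← Iio_union_Ici (a := (0 : ℝ))]
  exact hIio.union (Iff.mpr integrableOn_Ici_iff_integrableOn_Ioi hIoi)

namespace Real

lemma tanh_eq_exp_neg_two_mul (x : ℝ) : tanh x = (1 - exp (-2 * x)) / (1 + exp (-2 * x)) := by
  have hexp : exp (-2 * x) = exp (-x) / exp x := by rw [← exp_sub]; ring_nf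
  rw [tanh_eq_sinh_div_cosh, sinh_eq, cosh_eq, hexp]
  field_simp

lemma tendsto_tanh_atTop : Tendsto tanh atTop (𝓝 1) := by
  have hexp : Tendsto (fun x : ℝ => exp (-2 * x)) atTop (𝓝 0) :=
    tendsto_exp_atBot.comp (tendsto_id.const_mul_atTop_of_neg (by norm_num))
  have := (tendsto_const_nhds (x := (1 : ℝ)).sub hexp).div
    (tendsto_const_nhds (x := (1 : ℝ)).add hexp) (by norm_num)
  rw [funext tanh_eq_exp_neg_two_mul]
  simp only [sub_zero, add_zero, div_one] at this
  exact this

lemma tendsto_tanh_atBot : Tendsto tanh atBot (𝓝 (-1)) := by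
  have := (tendsto_tanh_atTop.comp tendsto_neg_atBot_atTop).neg
  simpa only [Function.comp_def, tanh_neg, neg_neg] using this

lemma hasDerivAt_tanh (x : ℝ) : HasDerivAt tanh (1 - tanh x ^ 2) x := by
  have hcosh : cosh x ≠ 0 := (cosh_pos x).ne'
  refine (((hasDerivAt_sinh x).div (hasDerivAt_cosh x) hcosh).congr_of_eventuallyEq
    (.of_forall tanh_eq_sinh_div_cosh)).congr_deriv ?_
  rw [tanh_eq_sinh_div_cosh]
  field_simp

lemma hasDerivAt_tanh_sub_tanh_pow_three_div_three (x : ℝ) :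
    HasDerivAt (fun y => tanh y - tanh y ^ 3 / 3) ((1 - tanh x ^ 2) ^ 2) x := by
  refine ((hasDerivAt_tanh x).fun_sub
    (((hasDerivAt_tanh x).fun_pow 3).div_const 3)).congr_deriv ?_
  push_cast
  ring

lemma integral_one_sub_tanh_sq_sq : ∫ x, (1 - tanh x ^ 2) ^ 2 = 4 / 3 := by
  have hbot : Tendsto (fun y => tanh y - tanh y ^ 3 / 3) atBot (𝓝 (-1 - (-1) ^ 3 / 3)) :=
    tendsto_tanh_atBot.sub ((tendsto_tanh_atBot.pow 3).div_const 3)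
  have htop : Tendsto (fun y => tanh y - tanh y ^ 3 / 3) atTop (𝓝 (1 - 1 ^ 3 / 3)) :=
    tendsto_tanh_atTop.sub ((tendsto_tanh_atTop.pow 3).div_const 3)
  have hint := integrable_of_hasDerivAt_of_nonneg hasDerivAt_tanh_sub_tanh_pow_three_div_three
    (fun x => sq_nonneg _) hbot htop
  rw [integral_of_hasDerivAt_of_tendsto hasDerivAt_tanh_sub_tanh_pow_three_div_three hint hbot htop]
  norm_num

end Real

theorem stmt_2 :
    (∫ z : ℝ, (1 / 4) * ((Real.tanh (z / Real.sqrt 2)) ^ 2 - 1) ^ 2) =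
      Real.sqrt 2 / 3 := by
  simp_rw [sub_sq_comm _ (1 : ℝ)]
  rw [integral_const_mul, Measure.integral_comp_div (fun y => (1 - tanh y ^ 2) ^ 2),
    integral_one_sub_tanh_sq_sq, abs_of_pos (by positivity), smul_eq_mul]
  ring
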